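/- Let H be an inner product space, η > 0, and x_1,…,x_n ∈ H such that ‖x_j − x_i‖ ≤ η < ‖x_j‖ for all i, j ∈ {1,…,n}. Then ∑_{i=1}^n √(‖x_i‖² − η²) ≤ ‖∑_{i=1}^n x_i‖² / ∑_{i=1}^n ‖x_i‖. -/

import Mathlib

open Finset RCLike
open scoped InnerProductSpace

section

variable {𝕜 H : Type*} [RCLike 𝕜] [NormedAddCommGroup H] [InnerProductSpace 𝕜 H]

theorem norm_sum_sq_eq_sum_sum_re_inner {ι : Type*} (s : Finset ι) (x : ι → H) :
    ‖∑ i ∈ s, x i‖ ^ 2 = ∑ i ∈ s, ∑ j ∈ s, re ⟪x i, x j⟫_𝕜 := by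
  simp only [← inner_self_eq_norm_sq (𝕜 := 𝕜), sum_inner, inner_sum, map_sum]
  exact sum_comm

/-- Both products are bounded by AM-GM, and `‖u‖² + ‖v‖² - η² ≤ 2 re ⟪u, v⟫` since `‖u - v‖ ≤ η`. -/
theorem sqrt_sq_sub_sq_mul_norm_add_le_two_re_inner {u v : H} {η : ℝ}
    (huv : ‖u - v‖ ≤ η) (hu : η ≤ ‖u‖) (hv : η ≤ ‖v‖) :
    √(‖u‖ ^ 2 - η ^ 2) * ‖v‖ + √(‖v‖ ^ 2 - η ^ 2) * ‖u‖ ≤ 2 * re ⟪u, v⟫_𝕜 := by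
  have hη : 0 ≤ η := (norm_nonneg _).trans huv
  have hsq_u : √(‖u‖ ^ 2 - η ^ 2) ^ 2 = ‖u‖ ^ 2 - η ^ 2 := Real.sq_sqrt (by nlinarith)
  have hsq_v : √(‖v‖ ^ 2 - η ^ 2) ^ 2 = ‖v‖ ^ 2 - η ^ 2 := Real.sq_sqrt (by nlinarith)
  have hdist : ‖u - v‖ ^ 2 ≤ η ^ 2 := pow_le_pow_left₀ (norm_nonneg _) huv 2
  have hexpand := norm_sub_sq (𝕜 := 𝕜) u v
  nlinarith [two_mul_le_add_sq (√(‖u‖ ^ 2 - η ^ 2)) ‖v‖,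
    two_mul_le_add_sq (√(‖v‖ ^ 2 - η ^ 2)) ‖u‖]

theorem sum_mul_sum_le_norm_sum_sq {ι : Type*} {s : Finset ι} {f g : ι → ℝ} {x : ι → H}
    (h : ∀ i ∈ s, ∀ j ∈ s, f i * g j + f j * g i ≤ 2 * re ⟪x i, x j⟫_𝕜) :
    (∑ i ∈ s, f i) * ∑ i ∈ s, g i ≤ ‖∑ i ∈ s, x i‖ ^ 2 := by
  have hsymm : 2 * ((∑ i ∈ s, f i) * ∑ i ∈ s, g i)
      = ∑ i ∈ s, ∑ j ∈ s, (f i * g j + f j * g i) := by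
    rw [sum_mul_sum, two_mul]
    simp only [sum_add_distrib]
    rw [sum_comm (f := fun i j => f j * g i)]
  have hpair : ∑ i ∈ s, ∑ j ∈ s, (f i * g j + f j * g i)
      ≤ ∑ i ∈ s, ∑ j ∈ s, 2 * re ⟪x i, x j⟫_𝕜 :=
    sum_le_sum fun i hi => sum_le_sum fun j hj => h i hi j hj
  rw [norm_sum_sq_eq_sum_sum_re_inner (𝕜 := 𝕜)]
  simp only [← mul_sum] at hpair
  linarith

end

theorem stmt_19_general {𝕜 H : Type*} [RCLike 𝕜] [NormedAddCommGroup H] [InnerProductSpace 𝕜 H]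
    (n : ℕ) (η : ℝ) (x : ℕ → H)
    (h : ∀ i ∈ Finset.Icc 1 n, ∀ j ∈ Finset.Icc 1 n,
      ‖x j - x i‖ ≤ η ∧ η < ‖x j‖) :
    ∑ i ∈ Finset.Icc 1 n, Real.sqrt (‖x i‖ ^ 2 - η ^ 2) ≤
      ‖∑ i ∈ Finset.Icc 1 n, x i‖ ^ 2 / ∑ i ∈ Finset.Icc 1 n, ‖x i‖ := by
  rcases (Icc 1 n).eq_empty_or_nonempty with hempty | ⟨k, hk⟩
  · simp [hempty]
  have hnorm_pos : 0 < ∑ i ∈ Icc 1 n, ‖x i‖ := by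
    have hη : 0 ≤ η := (norm_nonneg _).trans (h k hk k hk).1
    exact sum_pos (fun i hi => hη.trans_lt (h i hi i hi).2) ⟨k, hk⟩
  rw [le_div_iff₀ hnorm_pos]
  refine sum_mul_sum_le_norm_sum_sq (𝕜 := 𝕜) fun i hi j hj => ?_
  exact sqrt_sq_sub_sq_mul_norm_add_le_two_re_inner (by rw [norm_sub_rev]; exact (h i hi j hj).1)
    (h i hi i hi).2.le (h j hj j hj).2.le

theorem stmt_19 {𝕜 H : Type*} [RCLike 𝕜] [NormedAddCommGroup H] [InnerProductSpace 𝕜 H]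
    (n : ℕ) (hn : 1 ≤ n) (η : ℝ) (hη : 0 < η) (x : ℕ → H)
    (h : ∀ i ∈ Finset.Icc 1 n, ∀ j ∈ Finset.Icc 1 n,
      ‖x j - x i‖ ≤ η ∧ η < ‖x j‖) :
    ∑ i ∈ Finset.Icc 1 n, Real.sqrt (‖x i‖ ^ 2 - η ^ 2) ≤
      ‖∑ i ∈ Finset.Icc 1 n, x i‖ ^ 2 / ∑ i ∈ Finset.Icc 1 n, ‖x i‖ :=
  stmt_19_general (𝕜 := 𝕜) n η x h
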